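/- An m×n rectangle (m, n ≥ 1) can be tiled by translated copies of the 1×k rectangle and the k×1 rectangle if and only if k divides m or k divides n. -/
import Mathlib


/-- The `m × n` rectangle `{0,…,m−1} × {0,…,n−1}` of cells. -/
def rect (m n : ℕ) : Finset (ℤ × ℤ) :=
  (Finset.range m ×ˢ Finset.range n).image fun p => ((p.1 : ℤ), (p.2 : ℤ))

/-- Horizontal segment of `k` consecutive cells starting at `v`. -/
def hseg (v : ℤ × ℤ) (k : ℕ) : Finset (ℤ × ℤ) :=
  (Finset.range k).image fun j : ℕ => (v.1 + (j : ℤ), v.2)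

/-- Vertical segment of `k` consecutive cells starting at `v`. -/
def vseg (v : ℤ × ℤ) (k : ℕ) : Finset (ℤ × ℤ) :=
  (Finset.range k).image fun j : ℕ => (v.1, v.2 + (j : ℤ))

lemma mem_rect {m n : ℕ} {x : ℤ × ℤ} :
    x ∈ rect m n ↔ 0 ≤ x.1 ∧ x.1 < m ∧ 0 ≤ x.2 ∧ x.2 < n := by
  simp only [rect, Finset.mem_image, Finset.mem_product, Finset.mem_range, Prod.exists]
  constructor
  · rintro ⟨a, b, ⟨ha, hb⟩, rfl⟩
    simp; omega
  · rintro ⟨h1, h2, h3, h4⟩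
    exact ⟨x.1.toNat, x.2.toNat, ⟨by omega, by omega⟩, by
      rw [Int.toNat_of_nonneg h1, Int.toNat_of_nonneg h3]⟩

lemma mem_hseg {v x : ℤ × ℤ} {k : ℕ} :
    x ∈ hseg v k ↔ ∃ j < k, x = (v.1 + (j : ℤ), v.2) := by
  simp only [hseg, Finset.mem_image, Finset.mem_range]
  constructor
  · rintro ⟨j, hj, rfl⟩; exact ⟨j, hj, rfl⟩
  · rintro ⟨j, hj, rfl⟩; exact ⟨j, hj, rfl⟩

lemma mem_vseg {v x : ℤ × ℤ} {k : ℕ} :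
    x ∈ vseg v k ↔ ∃ j < k, x = (v.1, v.2 + (j : ℤ)) := by
  simp only [vseg, Finset.mem_image, Finset.mem_range]
  constructor
  · rintro ⟨j, hj, rfl⟩; exact ⟨j, hj, rfl⟩
  · rintro ⟨j, hj, rfl⟩; exact ⟨j, hj, rfl⟩


lemma seg_index_eq {k a1 j1 a2 j2 : ℕ} (h1 : j1 < k) (h2 : j2 < k)
    (h : k * a1 + j1 = k * a2 + j2) : a1 = a2 := by
  have e1 : (k * a1 + j1) / k = a1 := by
    rw [Nat.mul_add_div (by omega), Nat.div_eq_of_lt h1, Nat.add_zero]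
  have e2 : (k * a2 + j2) / k = a2 := by
    rw [Nat.mul_add_div (by omega), Nat.div_eq_of_lt h2, Nat.add_zero]
  rw [h] at e1; omega

/-- Construction when `k ∣ m` : horizontal bricks. -/
lemma tile_of_dvd_m {m n k : ℕ} (hk : 1 ≤ k) (h : k ∣ m) :
    ∃ pieces : Finset (Finset (ℤ × ℤ)),
      (∀ q ∈ pieces, ∃ v, q = hseg v k ∨ q = vseg v k) ∧
      (pieces : Set (Finset (ℤ × ℤ))).Pairwise Disjoint ∧
      (∀ x, x ∈ rect m n ↔ ∃ q ∈ pieces, x ∈ q) := by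
  refine ⟨(Finset.range (m / k) ×ˢ Finset.range n).image
      fun p => hseg (((k * p.1 : ℕ) : ℤ), (p.2 : ℤ)) k, ?_, ?_, ?_⟩
  · intro q hq
    simp only [Finset.mem_image, Finset.mem_product, Finset.mem_range, Prod.exists] at hq
    obtain ⟨a, b, -, rfl⟩ := hq
    exact ⟨_, Or.inl rfl⟩
  · intro q1 hq1 q2 hq2 hne
    simp only [Finset.coe_image, Set.mem_image, Finset.mem_coe, Finset.mem_product,
      Finset.mem_range, Prod.exists] at hq1 hq2
    obtain ⟨a1, b1, -, rfl⟩ := hq1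
    obtain ⟨a2, b2, -, rfl⟩ := hq2
    rw [Finset.disjoint_left]
    intro x hx1 hx2
    rw [mem_hseg] at hx1 hx2
    obtain ⟨j1, hj1, rfl⟩ := hx1
    obtain ⟨j2, hj2, hx⟩ := hx2
    simp only [Prod.mk.injEq] at hx
    have hnat : k * a1 + j1 = k * a2 + j2 := by exact_mod_cast hx.1
    have ha : a1 = a2 := seg_index_eq hj1 hj2 hnat
    have hb : b1 = b2 := by exact_mod_cast hx.2
    exact hne (by rw [ha, hb])
  · intro x
    rw [mem_rect]
    simp only [Finset.mem_image, Finset.mem_product, Finset.mem_range, Prod.exists]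
    constructor
    · rintro ⟨h1, h2, h3, h4⟩
      refine ⟨hseg (((k * (x.1.toNat / k) : ℕ) : ℤ), (x.2.toNat : ℤ)) k,
        ⟨x.1.toNat / k, x.2.toNat, ⟨?_, by omega⟩, rfl⟩, ?_⟩
      · obtain ⟨c, rfl⟩ := h
        have : x.1.toNat < k * c := by omega
        have h1' : x.1.toNat / k < c := Nat.div_lt_of_lt_mul (by omega)
        simpa [Nat.mul_div_cancel_left c (by omega : 0 < k)] using h1'
      · rw [mem_hseg]
        refine ⟨x.1.toNat % k, Nat.mod_lt _ (by omega), ?_⟩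
        have hx1 : ((k * (x.1.toNat / k) : ℕ) : ℤ) + (x.1.toNat % k : ℕ) = x.1 := by
          rw [← Nat.cast_add, Nat.div_add_mod]; omega
        have hx2 : (x.2.toNat : ℤ) = x.2 := by omega
        rw [Prod.ext_iff]; exact ⟨hx1.symm, hx2.symm⟩
    · rintro ⟨q, ⟨a, b, ⟨ha, hb⟩, rfl⟩, hx⟩
      rw [mem_hseg] at hx
      obtain ⟨j, hj, rfl⟩ := hx
      obtain ⟨c, rfl⟩ := h
      have ha' : a < c := by
        have := Nat.mul_div_cancel_left c (by omega : 0 < k)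
        omega
      have hlt : k * a + j < k * c := by nlinarith
      exact ⟨by positivity,
        show ((k * a : ℕ) : ℤ) + (j : ℕ) < ((k * c : ℕ) : ℤ) from by exact_mod_cast hlt,
        by positivity, show ((b : ℕ) : ℤ) < ((n : ℕ) : ℤ) from by exact_mod_cast hb⟩

/-- Construction when `k ∣ n` : vertical bricks. -/
lemma tile_of_dvd_n {m n k : ℕ} (hk : 1 ≤ k) (h : k ∣ n) :
    ∃ pieces : Finset (Finset (ℤ × ℤ)),
      (∀ q ∈ pieces, ∃ v, q = hseg v k ∨ q = vseg v k) ∧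
      (pieces : Set (Finset (ℤ × ℤ))).Pairwise Disjoint ∧
      (∀ x, x ∈ rect m n ↔ ∃ q ∈ pieces, x ∈ q) := by
  refine ⟨(Finset.range m ×ˢ Finset.range (n / k)).image
      fun p => vseg ((p.1 : ℤ), ((k * p.2 : ℕ) : ℤ)) k, ?_, ?_, ?_⟩
  · intro q hq
    simp only [Finset.mem_image, Finset.mem_product, Finset.mem_range, Prod.exists] at hq
    obtain ⟨a, b, -, rfl⟩ := hq
    exact ⟨_, Or.inr rfl⟩
  · intro q1 hq1 q2 hq2 hne
    simp only [Finset.coe_image, Set.mem_image, Finset.mem_coe, Finset.mem_product,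
      Finset.mem_range, Prod.exists] at hq1 hq2
    obtain ⟨a1, b1, -, rfl⟩ := hq1
    obtain ⟨a2, b2, -, rfl⟩ := hq2
    rw [Finset.disjoint_left]
    intro x hx1 hx2
    rw [mem_vseg] at hx1 hx2
    obtain ⟨j1, hj1, rfl⟩ := hx1
    obtain ⟨j2, hj2, hx⟩ := hx2
    simp only [Prod.mk.injEq] at hx
    have hnat : k * b1 + j1 = k * b2 + j2 := by exact_mod_cast hx.2
    have hb : b1 = b2 := seg_index_eq hj1 hj2 hnat
    have ha : a1 = a2 := by exact_mod_cast hx.1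
    exact hne (by rw [ha, hb])
  · intro x
    rw [mem_rect]
    simp only [Finset.mem_image, Finset.mem_product, Finset.mem_range, Prod.exists]
    constructor
    · rintro ⟨h1, h2, h3, h4⟩
      refine ⟨vseg ((x.1.toNat : ℤ), ((k * (x.2.toNat / k) : ℕ) : ℤ)) k,
        ⟨x.1.toNat, x.2.toNat / k, ⟨by omega, ?_⟩, rfl⟩, ?_⟩
      · obtain ⟨c, rfl⟩ := h
        have : x.2.toNat < k * c := by omega
        have h1' : x.2.toNat / k < c := Nat.div_lt_of_lt_mul (by omega)
        simpa [Nat.mul_div_cancel_left c (by omega : 0 < k)] using h1'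
      · rw [mem_vseg]
        refine ⟨x.2.toNat % k, Nat.mod_lt _ (by omega), ?_⟩
        have hx2 : ((k * (x.2.toNat / k) : ℕ) : ℤ) + (x.2.toNat % k : ℕ) = x.2 := by
          rw [← Nat.cast_add, Nat.div_add_mod]; omega
        have hx1 : (x.1.toNat : ℤ) = x.1 := by omega
        rw [Prod.ext_iff]; exact ⟨hx1.symm, hx2.symm⟩
    · rintro ⟨q, ⟨a, b, ⟨ha, hb⟩, rfl⟩, hx⟩
      rw [mem_vseg] at hx
      obtain ⟨j, hj, rfl⟩ := hx
      obtain ⟨c, rfl⟩ := h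
      have hb' : b < c := by
        have := Nat.mul_div_cancel_left c (by omega : 0 < k)
        omega
      have hlt : k * b + j < k * c := by nlinarith
      exact ⟨by positivity, show ((a : ℕ) : ℤ) < ((m : ℕ) : ℤ) from by exact_mod_cast ha,
        by positivity,
        show ((k * b : ℕ) : ℤ) + (j : ℕ) < ((k * c : ℕ) : ℤ) from by exact_mod_cast hlt⟩

/-- de Bruijn: an `m × n` rectangle can be tiled by translated
copies of the `1 × k` and `k × 1` bricks iff `k ∣ m` or `k ∣ n`. -/
theorem stmt6 (m n k : ℕ) (hm : 1 ≤ m) (hn : 1 ≤ n) (hk : 1 ≤ k) :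
    (∃ pieces : Finset (Finset (ℤ × ℤ)),
      (∀ q ∈ pieces, ∃ v, q = hseg v k ∨ q = vseg v k) ∧
      (pieces : Set (Finset (ℤ × ℤ))).Pairwise Disjoint ∧
      (∀ x, x ∈ rect m n ↔ ∃ q ∈ pieces, x ∈ q)) ↔ (k ∣ m ∨ k ∣ n) := by
  constructor
  · rintro ⟨pieces, hshape, hdisj, hcover⟩
    rcases eq_or_lt_of_le hk with hk1 | hk2
    · exact Or.inl ⟨m, by rw [← hk1, one_mul]⟩
    -- primitive k-th root of unity
    obtain ⟨ω, hω⟩ : ∃ ω : ℂ, IsPrimitiveRoot ω k :=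
      ⟨_, Complex.isPrimitiveRoot_exp k (by omega)⟩
    have hω0 : ω ≠ 0 := hω.ne_zero (by omega)
    set f : ℤ × ℤ → ℂ := fun x => ω ^ (x.1 + x.2) with hf
    have hgeom : ∑ i ∈ Finset.range k, ω ^ i = 0 := hω.geom_sum_eq_zero hk2
    -- sum over rect factorizes
    have hrect : ∑ x ∈ rect m n, f x =
        (∑ i ∈ Finset.range m, ω ^ i) * (∑ j ∈ Finset.range n, ω ^ j) := by
      rw [rect, Finset.sum_image (by
        intro p hp q hq hpq
        simp only [Prod.mk.injEq] at hpq
        exact Prod.ext (by exact_mod_cast hpq.1) (by exact_mod_cast hpq.2))]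
      rw [Finset.sum_mul_sum, Finset.sum_product]
      refine Finset.sum_congr rfl fun i _ => Finset.sum_congr rfl fun j _ => ?_
      simp only [hf]
      rw [zpow_add₀ hω0, zpow_natCast, zpow_natCast]
    -- sum over rect is zero
    have hzero : ∑ x ∈ rect m n, f x = 0 := by
      have hreq : rect m n = pieces.biUnion (fun q => q) := by
        ext x
        rw [hcover x, Finset.mem_biUnion]
      rw [hreq, Finset.sum_biUnion (fun q hq r hr hqr => hdisj hq hr hqr)]
      refine Finset.sum_eq_zero fun q hq => ?_
      obtain ⟨v, hv | hv⟩ := hshape q hq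
      · subst hv
        rw [hseg, Finset.sum_image (by
          intro a _ b _ hab
          simp only [Prod.mk.injEq] at hab
          exact_mod_cast (by omega : v.1 + (a : ℤ) = v.1 + b → (a : ℤ) = b) hab.1)]
        simp only [hf]
        have : ∀ j ∈ Finset.range k,
            ω ^ ((v.1 + (j : ℤ)) + v.2) = ω ^ (v.1 + v.2) * ω ^ j := by
          intro j _
          rw [show (v.1 + (j : ℤ)) + v.2 = (v.1 + v.2) + j by ring,
            zpow_add₀ hω0, zpow_natCast]
        rw [Finset.sum_congr rfl this, ← Finset.mul_sum, hgeom, mul_zero]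
      · subst hv
        rw [vseg, Finset.sum_image (by
          intro a _ b _ hab
          simp only [Prod.mk.injEq] at hab
          exact_mod_cast (by omega : v.2 + (a : ℤ) = v.2 + b → (a : ℤ) = b) hab.2)]
        simp only [hf]
        have : ∀ j ∈ Finset.range k,
            ω ^ (v.1 + (v.2 + (j : ℤ))) = ω ^ (v.1 + v.2) * ω ^ j := by
          intro j _
          rw [show v.1 + (v.2 + (j : ℤ)) = (v.1 + v.2) + j by ring,
            zpow_add₀ hω0, zpow_natCast]
        rw [Finset.sum_congr rfl this, ← Finset.mul_sum, hgeom, mul_zero]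
    rw [hrect] at hzero
    rcases mul_eq_zero.mp hzero with h | h
    · left
      rw [← hω.pow_eq_one_iff_dvd]
      have := geom_sum_mul ω m
      rw [h, zero_mul] at this
      have : ω ^ m = 1 := by linear_combination -this
      exact this
    · right
      rw [← hω.pow_eq_one_iff_dvd]
      have := geom_sum_mul ω n
      rw [h, zero_mul] at this
      have : ω ^ n = 1 := by linear_combination -this
      exact this
  · rintro (h | h)
    · exact tile_of_dvd_m hk h
    · exact tile_of_dvd_n hk h
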